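/- (Fano's inequality, testing form.) Let V be a finite set with |V| ≥ 2, let (Q_v)_{v ∈ V} be probability measures on a measurable space E, and let T : E → V be any measurable map. Then (1/|V|) Σ_{v ∈ V} Q_v({x : T(x) ≠ v}) ≥ 1 − (max_{v ≠ v'} KL(Q_v ‖ Q_{v'}) + log 2)/log |V|, where KL denotes the Kullback–Leibler divergence. -/

import Mathlib

open MeasureTheory
open scoped ENNReal Classical

/-- The Kullback–Leibler divergence `KL(P ‖ Q) = ∫ log(dP/dQ) dP`, valued in `ℝ≥0∞`, with the
convention that it is `∞` when `P` is not absolutely continuous with respect to `Q` (or the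
integral does not exist). -/
noncomputable def klDiv {E : Type*} [MeasurableSpace E] (P Q : Measure E) : ℝ≥0∞ :=
  if P ≪ Q ∧ Integrable (fun x => Real.log (P.rnDeriv Q x).toReal) P then
    ENNReal.ofReal (∫ x, Real.log (P.rnDeriv Q x).toReal ∂P)
  else ⊤

open Real Finset

lemma klDiv_eq {E : Type*} [MeasurableSpace E] (P Q : Measure E) :
    klDiv P Q = if P ≪ Q ∧ Integrable (llr P Q) P then
      ENNReal.ofReal (∫ x, llr P Q x ∂P) else ⊤ := rfl


lemma setIntegral_llr_ge {E : Type*} [MeasurableSpace E] (P Q : Measure E)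
    [IsProbabilityMeasure P] [IsProbabilityMeasure Q]
    (hPQ : P ≪ Q) (hint : Integrable (llr P Q) P) {A : Set E} (hA : MeasurableSet A) :
    (P A).toReal * Real.log ((P A).toReal / (Q A).toReal) ≤ ∫ x in A, llr P Q x ∂P := by
  rcases eq_or_ne (P A) 0 with hPA | hPA
  · rw [Measure.restrict_eq_zero.mpr hPA, integral_zero_measure, hPA]
    simp
  have hp : 0 < (P A).toReal := ENNReal.toReal_pos hPA (measure_ne_top _ _)
  have hQA : Q A ≠ 0 := fun h => hPA (hPQ h)
  have hq : 0 < (Q A).toReal := ENNReal.toReal_pos hQA (measure_ne_top _ _)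
  set p := (P A).toReal with hpdef
  set q := (Q A).toReal with hqdef
  -- f = toReal of rnDeriv
  set f : E → ℝ := fun x => ((P.rnDeriv Q x).toReal) with hf
  have hfmeas : Measurable f := (Measure.measurable_rnDeriv P Q).ennreal_toReal
  have hfpos : ∀ᵐ x ∂P, 0 < f x := by
    filter_upwards [Measure.rnDeriv_pos hPQ, hPQ.ae_le (Measure.rnDeriv_lt_top P Q)]
      with x h1 h2
    exact ENNReal.toReal_pos h1.ne' h2.ne
  -- lintegral bound for the inverse
  have hlint : ∫⁻ x in A, ENNReal.ofReal ((f x)⁻¹) ∂P ≤ Q A := by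
    have h1 : ∀ x, ENNReal.ofReal ((f x)⁻¹) ≤ (P.rnDeriv Q x)⁻¹ := by
      intro x
      rw [hf, ← ENNReal.toReal_inv]
      exact ENNReal.ofReal_toReal_le
    calc ∫⁻ x in A, ENNReal.ofReal ((f x)⁻¹) ∂P
        ≤ ∫⁻ x in A, (P.rnDeriv Q x)⁻¹ ∂P := lintegral_mono h1
      _ = ∫⁻ x in A, (P.rnDeriv Q x)⁻¹ ∂(Q.withDensity (P.rnDeriv Q)) := by
          rw [Measure.withDensity_rnDeriv_eq P Q hPQ]
      _ = ∫⁻ x in A, (P.rnDeriv Q x)⁻¹ * (P.rnDeriv Q x) ∂Q := by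
          rw [restrict_withDensity hA, lintegral_withDensity_eq_lintegral_mul _
            (Measure.measurable_rnDeriv P Q)
            (show Measurable (fun x => (P.rnDeriv Q x)⁻¹) from (Measure.measurable_rnDeriv P Q).inv)]
          simp [mul_comm]
      _ ≤ ∫⁻ _ in A, 1 ∂Q := lintegral_mono fun x => ENNReal.inv_mul_le_one _
      _ = Q A := by simp
  have hinv_int : IntegrableOn (fun x => (f x)⁻¹) A P := by
    refine ⟨(hfmeas.inv.aestronglyMeasurable).restrict, ?_⟩
    rw [hasFiniteIntegral_iff_ofReal]
    · exact lt_of_le_of_lt hlint (measure_lt_top Q A)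
    · filter_upwards [] with x
      positivity
  have hinv_le : ∫ x in A, (f x)⁻¹ ∂P ≤ q := by
    rw [integral_eq_lintegral_of_nonneg_ae (f := fun x => (f x)⁻¹)
      (Filter.Eventually.of_forall (fun x => inv_nonneg.mpr ENNReal.toReal_nonneg))
      (hfmeas.inv.aestronglyMeasurable).restrict]
    exact (ENNReal.toReal_le_toReal (by
      exact ne_of_lt (lt_of_le_of_lt hlint (measure_lt_top Q A))) (measure_ne_top Q A)).mpr hlint
  set c := Real.log (p / q) with hc
  have hgint : IntegrableOn (fun x => 1 - (p/q) * (f x)⁻¹) A P :=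
    (integrable_const 1).sub (hinv_int.const_mul _)
  have hlint2 : IntegrableOn (fun x => llr P Q x - c) A P :=
    hint.integrableOn.sub (integrable_const _)
  have hptwise : ∀ᵐ x ∂(P.restrict A), 1 - (p/q) * (f x)⁻¹ ≤ llr P Q x - c := by
    filter_upwards [ae_restrict_of_ae hfpos] with x hx
    have h0 : 0 < (p/q) * (f x)⁻¹ := by positivity
    have h1 := Real.log_le_sub_one_of_pos h0
    have h2 : Real.log ((p/q) * (f x)⁻¹) = c - llr P Q x := by
      rw [Real.log_mul (by positivity) (by positivity), Real.log_inv]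
      simp only [llr, hf]
      ring
    rw [h2] at h1
    linarith
  have hmono := integral_mono_ae hgint hlint2 hptwise
  have e1 : ∫ x in A, (1 - (p/q) * (f x)⁻¹) ∂P = p - (p/q) * ∫ x in A, (f x)⁻¹ ∂P := by
    rw [integral_sub (integrable_const 1) (hinv_int.const_mul _), integral_const,
      integral_const_mul]
    simp [hpdef, Measure.real]
  have e2 : ∫ x in A, (llr P Q x - c) ∂P = (∫ x in A, llr P Q x ∂P) - c * p := by
    rw [integral_sub hint.integrableOn (integrable_const _), integral_const]
    simp [hpdef, mul_comm, Measure.real]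
  rw [e1, e2] at hmono
  have h3 : p - (p/q) * ∫ x in A, (f x)⁻¹ ∂P ≥ p - (p/q) * q := by
    have : (p/q) * ∫ x in A, (f x)⁻¹ ∂P ≤ (p/q) * q :=
      mul_le_mul_of_nonneg_left hinv_le (by positivity)
    linarith
  have h4 : p - (p/q) * q = 0 := by field_simp; ring
  nlinarith [hmono, h3]


lemma fano_discrete {V : Type*} [Fintype V] [DecidableEq V] (hV : 2 ≤ Fintype.card V)
    (ρ : V → ℝ) (hρ : ∀ v, 0 < ρ v) (hsum : ∑ v, ρ v = 1) (w : V) :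
    -Real.log 2 - (1 - ρ w) * Real.log (Fintype.card V) ≤ ∑ v, ρ v * Real.log (ρ v) := by
  classical
  set s : Finset V := Finset.univ.erase w with hs
  have hcard : s.card = Fintype.card V - 1 := by
    rw [hs, Finset.card_erase_of_mem (Finset.mem_univ w), Finset.card_univ]
  set t : ℝ := ∑ v ∈ s, ρ v with ht
  have hsplit : ρ w + t = 1 := by
    rw [ht, hs, Finset.add_sum_erase _ _ (Finset.mem_univ w)]
    exact hsum
  have hk1 : 1 ≤ s.card := by omega
  have htpos : 0 < t := by
    obtain ⟨v, hv⟩ := Finset.card_pos.mp (by omega : 0 < s.card)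
    exact Finset.sum_pos (fun v _ => hρ v) ⟨v, hv⟩
  set k : ℝ := (s.card : ℝ) with hkdef
  have hkpos : (1:ℝ) ≤ k := by rw [hkdef]; exact_mod_cast hk1
  have hk0 : 0 < k := lt_of_lt_of_le one_pos hkpos
  have hkne : k ≠ 0 := hk0.ne'
  -- part (a)
  have ha : t * Real.log t - t * Real.log k ≤ ∑ v ∈ s, ρ v * Real.log (ρ v) := by
    have key : ∑ v ∈ s, ρ v * (Real.log t - Real.log (ρ v) - Real.log k) ≤ 0 := by
      have hb : ∀ v ∈ s, ρ v * (Real.log t - Real.log (ρ v) - Real.log k) ≤ t / k - ρ v := by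
        intro v _
        have hρ0 : ρ v ≠ 0 := (hρ v).ne'
        have h0 : 0 < t / (ρ v * k) := div_pos htpos (mul_pos (hρ v) hk0)
        have h1 := Real.log_le_sub_one_of_pos h0
        have h2 : Real.log (t / (ρ v * k)) = Real.log t - Real.log (ρ v) - Real.log k := by
          rw [Real.log_div htpos.ne' (mul_pos (hρ v) hk0).ne',
            Real.log_mul hρ0 hkne]
          ring
        rw [h2] at h1
        have h3 : ρ v * (Real.log t - Real.log (ρ v) - Real.log k) ≤
            ρ v * (t / (ρ v * k) - 1) := mul_le_mul_of_nonneg_left h1 (hρ v).le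
        have h4 : ρ v * (t / (ρ v * k) - 1) = t / k - ρ v := by
          field_simp
        linarith
      calc ∑ v ∈ s, ρ v * (Real.log t - Real.log (ρ v) - Real.log k)
          ≤ ∑ v ∈ s, (t / k - ρ v) := Finset.sum_le_sum hb
        _ = (s.card : ℝ) * (t / k) - t := by
            rw [Finset.sum_sub_distrib, Finset.sum_const, nsmul_eq_mul, ← ht]
        _ = 0 := by rw [← hkdef]; field_simp; ring
    have expand : ∑ v ∈ s, ρ v * (Real.log t - Real.log (ρ v) - Real.log k)
        = t * (Real.log t - Real.log k) - ∑ v ∈ s, ρ v * Real.log (ρ v) := by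
      have e : ∀ v ∈ s, ρ v * (Real.log t - Real.log (ρ v) - Real.log k)
          = ρ v * (Real.log t - Real.log k) - ρ v * Real.log (ρ v) := fun v _ => by ring
      rw [Finset.sum_congr rfl e, Finset.sum_sub_distrib, ← Finset.sum_mul, ← ht]
    rw [expand] at key
    linarith
  -- part (b)
  have hb : -Real.log 2 ≤ ρ w * Real.log (ρ w) + t * Real.log t := by
    have key : ∀ x : ℝ, 0 < x → x - 1/2 ≤ x * Real.log (2 * x) := by
      intro x hx
      have h0 : 0 < 1 / (2 * x) := by positivity
      have h1 := Real.log_le_sub_one_of_pos h0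
      have h2 : Real.log (1 / (2 * x)) = -Real.log (2 * x) := by
        rw [one_div, Real.log_inv]
      rw [h2] at h1
      have h3 : x * (-Real.log (2*x)) ≤ x * (1/(2*x) - 1) := mul_le_mul_of_nonneg_left h1 hx.le
      have h4 : x * (1/(2*x) - 1) = 1/2 - x := by field_simp
      nlinarith
    have k1 := key (ρ w) (hρ w)
    have k2 := key t htpos
    have e1 : ρ w * Real.log (2 * ρ w) = ρ w * Real.log 2 + ρ w * Real.log (ρ w) := by
      rw [Real.log_mul two_ne_zero (hρ w).ne']; ring
    have e2 : t * Real.log (2 * t) = t * Real.log 2 + t * Real.log t := by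
      rw [Real.log_mul two_ne_zero htpos.ne']; ring
    have e3 : ρ w * Real.log 2 + t * Real.log 2 = Real.log 2 := by
      rw [← add_mul, hsplit, one_mul]
    linarith
  -- combine
  have htotal : ∑ v, ρ v * Real.log (ρ v)
      = ρ w * Real.log (ρ w) + ∑ v ∈ s, ρ v * Real.log (ρ v) := by
    rw [hs]; exact (Finset.add_sum_erase _ _ (Finset.mem_univ w)).symm
  have hklem : Real.log k ≤ Real.log (Fintype.card V) := by
    apply Real.log_le_log hk0
    rw [hkdef]
    exact_mod_cast Finset.card_le_univ s
  have htlog : t * Real.log k ≤ t * Real.log (Fintype.card V) :=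
    mul_le_mul_of_nonneg_left hklem htpos.le
  have htt : t = 1 - ρ w := by linarith
  rw [htotal, ← htt]
  linarith



/-- Fano's inequality, testing form: for a finite family `(Q_v)_{v ∈ V}` of
probability measures, `|V| ≥ 2`, and any measurable test `T : E → V`,
`(1/|V|) Σ_v Q_v(T ≠ v) ≥ 1 − (max_{v ≠ v'} KL(Q_v ‖ Q_{v'}) + log 2) / log |V|`
(in `ℝ≥0∞`, so the inequality holds trivially when the maximal KL divergence is infinite). -/
theorem fano_inequality {V E : Type*} [Fintype V] [DecidableEq V]
    [MeasurableSpace V] [MeasurableSingletonClass V] [MeasurableSpace E]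
    (hV : 2 ≤ Fintype.card V)
    (Q : V → Measure E) (hQ : ∀ v, IsProbabilityMeasure (Q v))
    (T : E → V) (hT : Measurable T) :
    1 - ((⨆ (v : V) (v' : V) (_ : v ≠ v'), klDiv (Q v) (Q v')) +
          ENNReal.ofReal (Real.log 2)) / ENNReal.ofReal (Real.log (Fintype.card V)) ≤
      (∑ v, Q v {x | T x ≠ v}) / (Fintype.card V : ℝ≥0∞) := by
  set Ssup := ⨆ (v : V) (v' : V) (_ : v ≠ v'), klDiv (Q v) (Q v') with hSsup
  have hMR : (2:ℝ) ≤ (Fintype.card V : ℝ) := by exact_mod_cast hV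
  have hM0 : (0:ℝ) < (Fintype.card V : ℝ) := by linarith
  have hlogM : 0 < Real.log (Fintype.card V) := Real.log_pos (by linarith)
  haveI : Nonempty V := Fintype.card_pos_iff.mp (by omega)
  rcases eq_or_ne Ssup ⊤ with htop | htop
  · have hdiv : (Ssup + ENNReal.ofReal (Real.log 2)) / ENNReal.ofReal (Real.log (Fintype.card V))
        = ⊤ := by
      rw [htop, top_add, ENNReal.top_div_of_ne_top ENNReal.ofReal_ne_top]
    rw [hdiv]
    simp
  -- main case
  set K := Ssup.toReal with hK
  have hK0 : 0 ≤ K := ENNReal.toReal_nonneg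
  have hKL : ∀ v v', v ≠ v' → (Q v ≪ Q v') ∧ Integrable (llr (Q v) (Q v')) (Q v) ∧
      ∫ x, llr (Q v) (Q v') x ∂(Q v) ≤ K := by
    intro v v' hne
    have hle : klDiv (Q v) (Q v') ≤ Ssup := by
      rw [hSsup]
      have h1 : klDiv (Q v) (Q v') ≤ ⨆ (_ : v ≠ v'), klDiv (Q v) (Q v') := le_iSup (fun _ : v ≠ v' => klDiv (Q v) (Q v')) hne
      have h2 : (⨆ (_ : v ≠ v'), klDiv (Q v) (Q v'))
          ≤ ⨆ v'', ⨆ (_ : v ≠ v''), klDiv (Q v) (Q v'') :=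
        le_iSup (fun v'' => ⨆ (_ : v ≠ v''), klDiv (Q v) (Q v'')) v'
      have h3 : (⨆ v'', ⨆ (_ : v ≠ v''), klDiv (Q v) (Q v''))
          ≤ ⨆ u, ⨆ v'', ⨆ (_ : u ≠ v''), klDiv (Q u) (Q v'') :=
        le_iSup (fun u => ⨆ v'', ⨆ (_ : u ≠ v''), klDiv (Q u) (Q v'')) v
      exact h1.trans (h2.trans h3)
    have hcond : (Q v ≪ Q v') ∧ Integrable (llr (Q v) (Q v')) (Q v) := by
      by_contra hcon
      rw [klDiv_eq, if_neg hcon] at hle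
      exact htop (top_le_iff.mp hle)
    refine ⟨hcond.1, hcond.2, ?_⟩
    rw [klDiv_eq, if_pos hcond] at hle
    rcases le_or_gt (∫ x, llr (Q v) (Q v') x ∂(Q v)) 0 with h | h
    · exact h.trans hK0
    · have := ENNReal.toReal_mono htop hle
      rwa [ENNReal.toReal_ofReal h.le] at this
  -- the partition
  set A : V → Set E := fun w => T ⁻¹' {w} with hA
  have hAm : ∀ w, MeasurableSet (A w) := fun w => hT (measurableSet_singleton w)
  have hAdis : Pairwise (Function.onFun Disjoint A) := by
    intro i j hij
    rw [Function.onFun, Set.disjoint_left]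
    intro x hxi hxj
    rw [hA, Set.mem_preimage, Set.mem_singleton_iff] at hxi hxj
    exact hij (hxi ▸ hxj ▸ rfl)
  have hAun : ⋃ w, A w = Set.univ := by
    ext x; simp [hA]
  set b : V → V → ℝ := fun v w => ((Q v) (A w)).toReal with hb
  have hb0 : ∀ v w, 0 ≤ b v w := fun v w => ENNReal.toReal_nonneg
  have hb1 : ∀ v w, b v w ≤ 1 := by
    intro v w
    haveI := hQ v
    have h := prob_le_one (μ := Q v) (s := A w)
    have := ENNReal.toReal_mono ENNReal.one_ne_top h
    simpa using this
  have hQAsum : ∀ v, ∑ w, Q v (A w) = 1 := by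
    intro v
    haveI := hQ v
    rw [← tsum_fintype (L := .unconditional _), ← measure_iUnion hAdis hAm, hAun, measure_univ]
  have hrow : ∀ v, ∑ w, b v w = 1 := by
    intro v
    rw [hb, ← ENNReal.toReal_sum (fun w _ => measure_ne_top _ _), hQAsum v, ENNReal.toReal_one]
  set c : V → ℝ := fun w => (∑ v, b v w) / (Fintype.card V : ℝ) with hc
  have hc0 : ∀ w, 0 ≤ c w := fun w => div_nonneg (Finset.sum_nonneg fun v _ => hb0 v w) hM0.le
  have hzero : ∀ v v' w, b v' w = 0 → b v w = 0 := by
    intro v v' w h0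
    rcases eq_or_ne v v' with rfl | hne
    · exact h0
    · have hQ0 : Q v' (A w) = 0 := by
        rcases (ENNReal.toReal_eq_zero_iff _).mp h0 with h | h
        · exact h
        · exact absurd h (measure_ne_top _ _)
      rw [hb]
      simp [(hKL v v' hne).1 hQ0]
  have hpos_all : ∀ w v v', 0 < b v w → 0 < b v' w := by
    intro w v v' hpos
    rcases eq_or_lt_of_le (hb0 v' w) with h | h
    · exact absurd (hzero v v' w h.symm) hpos.ne'
    · exact h
  -- data processing
  have hD : ∀ v v', v ≠ v' → ∑ w, b v w * Real.log (b v w / b v' w) ≤ K := by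
    intro v v' hne
    haveI := hQ v; haveI := hQ v'
    obtain ⟨hac, hint, hKb⟩ := hKL v v' hne
    have h1 : ∀ w ∈ Finset.univ, b v w * Real.log (b v w / b v' w)
        ≤ ∫ x in A w, llr (Q v) (Q v') x ∂(Q v) :=
      fun w _ => setIntegral_llr_ge (Q v) (Q v') hac hint (hAm w)
    have h2 : ∑ w, ∫ x in A w, llr (Q v) (Q v') x ∂(Q v) = ∫ x, llr (Q v) (Q v') x ∂(Q v) := by
      rw [← tsum_fintype (L := .unconditional _), ← integral_iUnion hAm hAdis hint.integrableOn, hAun,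
        Measure.restrict_univ]
    calc ∑ w, b v w * Real.log (b v w / b v' w)
        ≤ ∑ w, ∫ x in A w, llr (Q v) (Q v') x ∂(Q v) := Finset.sum_le_sum h1
      _ = ∫ x, llr (Q v) (Q v') x ∂(Q v) := h2
      _ ≤ K := hKb
  have hDself : ∀ v, ∑ w, b v w * Real.log (b v w / b v w) = 0 := by
    intro v
    apply Finset.sum_eq_zero
    intro w _
    rcases eq_or_ne (b v w) 0 with h | h
    · rw [h]; ring
    · rw [div_self h, Real.log_one, mul_zero]
  -- convexity in the second argument
  have hI : ∀ v, ∑ w, b v w * Real.log (b v w / c w) ≤ K := by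
    intro v
    have step : ∀ w ∈ Finset.univ, b v w * Real.log (b v w / c w)
        ≤ (Fintype.card V : ℝ)⁻¹ * ∑ v', b v w * Real.log (b v w / b v' w) := by
      intro w _
      rcases eq_or_lt_of_le (hb0 v w) with h0 | h0
      · rw [← h0]
        simp
      · have hposall : ∀ v', 0 < b v' w := fun v' => hpos_all w v v' h0
        have hsumpos : 0 < ∑ v', b v' w :=
          Finset.sum_pos (fun v' _ => hposall v') Finset.univ_nonempty
        have hcpos : 0 < c w := div_pos hsumpos hM0
        have hsumc : ∑ v', b v' w = (Fintype.card V : ℝ) * c w := by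
          rw [hc]; field_simp
        have hlogc : ∑ v', Real.log (b v' w) ≤ (Fintype.card V : ℝ) * Real.log (c w) := by
          have key : ∑ v' : V, (Real.log (b v' w) - Real.log (c w)) ≤ 0 := by
            have hub : ∀ v' ∈ Finset.univ, Real.log (b v' w) - Real.log (c w)
                ≤ b v' w / c w - 1 := by
              intro v' _
              have h := Real.log_le_sub_one_of_pos (div_pos (hposall v') hcpos)
              rwa [Real.log_div (hposall v').ne' hcpos.ne'] at h
            calc ∑ v' : V, (Real.log (b v' w) - Real.log (c w))
                ≤ ∑ v' : V, (b v' w / c w - 1) := Finset.sum_le_sum hub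
              _ = (∑ v', b v' w) / c w - (Fintype.card V : ℝ) := by
                  rw [Finset.sum_sub_distrib, ← Finset.sum_div, Finset.sum_const,
                    Finset.card_univ, nsmul_eq_mul, mul_one]
              _ = 0 := by rw [hsumc, mul_div_assoc, div_self hcpos.ne', mul_one, sub_self]
          rw [Finset.sum_sub_distrib, Finset.sum_const, Finset.card_univ, nsmul_eq_mul] at key
          linarith
        have e1 : b v w * Real.log (b v w / c w)
            = b v w * Real.log (b v w) - b v w * Real.log (c w) := by
          rw [Real.log_div h0.ne' hcpos.ne']; ring
        have e2 : (Fintype.card V : ℝ)⁻¹ * ∑ v', b v w * Real.log (b v w / b v' w)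
            = b v w * Real.log (b v w)
              - (Fintype.card V : ℝ)⁻¹ * b v w * ∑ v', Real.log (b v' w) := by
          have e3 : ∀ v' ∈ Finset.univ, b v w * Real.log (b v w / b v' w)
              = b v w * Real.log (b v w) - b v w * Real.log (b v' w) := by
            intro v' _
            rw [Real.log_div h0.ne' (hposall v').ne']; ring
          rw [Finset.sum_congr rfl e3, Finset.sum_sub_distrib, Finset.sum_const,
            Finset.card_univ, nsmul_eq_mul, ← Finset.mul_sum]
          field_simp
        rw [e1, e2]
        have h4 : (Fintype.card V : ℝ)⁻¹ * b v w * ∑ v', Real.log (b v' w)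
            ≤ b v w * Real.log (c w) := by
          have h5 : (Fintype.card V : ℝ)⁻¹ * b v w * ∑ v', Real.log (b v' w)
              ≤ (Fintype.card V : ℝ)⁻¹ * b v w * ((Fintype.card V : ℝ) * Real.log (c w)) := by
            apply mul_le_mul_of_nonneg_left hlogc
            positivity
          calc (Fintype.card V : ℝ)⁻¹ * b v w * ∑ v', Real.log (b v' w)
              ≤ (Fintype.card V : ℝ)⁻¹ * b v w * ((Fintype.card V : ℝ) * Real.log (c w)) := h5
            _ = b v w * Real.log (c w) := by field_simp
        linarith
    calc ∑ w, b v w * Real.log (b v w / c w)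
        ≤ ∑ w, (Fintype.card V : ℝ)⁻¹ * ∑ v', b v w * Real.log (b v w / b v' w) :=
          Finset.sum_le_sum step
      _ = (Fintype.card V : ℝ)⁻¹ * ∑ v', ∑ w, b v w * Real.log (b v w / b v' w) := by
          rw [← Finset.mul_sum, Finset.sum_comm]
      _ ≤ (Fintype.card V : ℝ)⁻¹ * ∑ _v' : V, K := by
          apply mul_le_mul_of_nonneg_left _ (by positivity)
          apply Finset.sum_le_sum
          intro v' _
          rcases eq_or_ne v v' with rfl | hne
          · rw [hDself v]; exact hK0
          · exact hD v v' hne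
      _ = K := by
          rw [Finset.sum_const, Finset.card_univ, nsmul_eq_mul]
          field_simp
  -- Fano step per w
  have hJ : ∀ w, b w w * Real.log (Fintype.card V)
      - ((Fintype.card V : ℝ) * c w) * Real.log 2 ≤ ∑ v, b v w * Real.log (b v w / c w) := by
    intro w
    rcases eq_or_lt_of_le (Finset.sum_nonneg (fun v (_ : v ∈ Finset.univ) => hb0 v w))
      with hsw | hsw
    · have hall : ∀ v, b v w = 0 := by
        intro v
        exact (Finset.sum_eq_zero_iff_of_nonneg (fun v _ => hb0 v w)).mp hsw.symm v
          (Finset.mem_univ v)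
      have hcw : c w = 0 := by rw [hc]; simp only [hall]; simp
      rw [Finset.sum_eq_zero (fun v _ => by rw [hall v]; ring), hall w, hcw]
      ring_nf
      simp
    · have hcpos : 0 < c w := div_pos hsw hM0
      have hv0 : ∃ v, 0 < b v w := by
        by_contra hcon
        push_neg at hcon
        have : ∑ v, b v w ≤ 0 := Finset.sum_nonpos (fun v _ => hcon v)
        linarith
      obtain ⟨v0, hv0⟩ := hv0
      have hposall : ∀ v, 0 < b v w := fun v => hpos_all w v0 v hv0
      have hMc : 0 < (Fintype.card V : ℝ) * c w := by positivity
      set ρ : V → ℝ := fun v => b v w / ((Fintype.card V : ℝ) * c w) with hρ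
      have hρpos : ∀ v, 0 < ρ v := fun v => div_pos (hposall v) hMc
      have hρsum : ∑ v, ρ v = 1 := by
        rw [hρ, ← Finset.sum_div, hc]
        field_simp
      have hfd := fano_discrete hV ρ hρpos hρsum w
      have hterm : ∀ v ∈ Finset.univ, b v w * Real.log (b v w / c w)
          = ((Fintype.card V : ℝ) * c w)
            * (ρ v * Real.log (Fintype.card V) + ρ v * Real.log (ρ v)) := by
        intro v _
        have hbv : b v w = ((Fintype.card V : ℝ) * c w) * ρ v := by
          rw [hρ]; field_simp
        have harg : b v w / c w = (Fintype.card V : ℝ) * ρ v := by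
          rw [hbv]; field_simp
        rw [harg, Real.log_mul hM0.ne' (hρpos v).ne']
        nth_rewrite 1 [hbv]
        ring
      rw [Finset.sum_congr rfl hterm]
      have hsum2 : ∑ v, ((Fintype.card V : ℝ) * c w)
            * (ρ v * Real.log (Fintype.card V) + ρ v * Real.log (ρ v))
          = ((Fintype.card V : ℝ) * c w)
            * (Real.log (Fintype.card V) + ∑ v, ρ v * Real.log (ρ v)) := by
        rw [← Finset.mul_sum, Finset.sum_add_distrib, ← Finset.sum_mul, hρsum, one_mul]
      rw [hsum2]
      have hρw : b w w = ((Fintype.card V : ℝ) * c w) * ρ w := by rw [hρ]; field_simp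
      rw [hρw]
      have hmul := mul_le_mul_of_nonneg_left hfd hMc.le
      nlinarith [hmul]
  -- summing everything up
  set S : ℝ := ∑ v, b v v with hS
  have hS0 : 0 ≤ S := Finset.sum_nonneg fun v _ => hb0 v v
  have hSM : S ≤ (Fintype.card V : ℝ) := by
    calc S ≤ ∑ _v : V, (1:ℝ) := Finset.sum_le_sum (fun v _ => hb1 v v)
      _ = (Fintype.card V : ℝ) := by simp [Finset.card_univ]
  have hcsum : ∑ w, (Fintype.card V : ℝ) * c w = (Fintype.card V : ℝ) := by
    have e : ∀ w ∈ Finset.univ, (Fintype.card V : ℝ) * c w = ∑ v, b v w := by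
      intro w _
      rw [hc]
      field_simp
    rw [Finset.sum_congr rfl e, Finset.sum_comm, Finset.sum_congr rfl (fun v _ => hrow v)]
    simp [Finset.card_univ]
  have hmain : S * Real.log (Fintype.card V) ≤ (Fintype.card V : ℝ) * (K + Real.log 2) := by
    have h1 : ∑ v, ∑ w, b v w * Real.log (b v w / c w) ≤ (Fintype.card V : ℝ) * K := by
      calc ∑ v, ∑ w, b v w * Real.log (b v w / c w) ≤ ∑ _v : V, K :=
            Finset.sum_le_sum (fun v _ => hI v)
        _ = (Fintype.card V : ℝ) * K := by
            rw [Finset.sum_const, Finset.card_univ, nsmul_eq_mul]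
    have h2 : S * Real.log (Fintype.card V) - (Fintype.card V : ℝ) * Real.log 2
        ≤ ∑ v, ∑ w, b v w * Real.log (b v w / c w) := by
      rw [Finset.sum_comm]
      have e : S * Real.log (Fintype.card V) - (Fintype.card V : ℝ) * Real.log 2
          = ∑ w, (b w w * Real.log (Fintype.card V)
            - ((Fintype.card V : ℝ) * c w) * Real.log 2) := by
        rw [Finset.sum_sub_distrib, ← Finset.sum_mul, ← Finset.sum_mul, hcsum, hS]
      rw [e]
      exact Finset.sum_le_sum (fun w _ => hJ w)
    linarith
  -- ENNReal endgame
  rw [tsub_le_iff_right]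
  have hofS : ENNReal.ofReal (S / (Fintype.card V : ℝ))
      ≤ (Ssup + ENNReal.ofReal (Real.log 2)) / ENNReal.ofReal (Real.log (Fintype.card V)) := by
    rw [ENNReal.le_div_iff_mul_le (Or.inl (ENNReal.ofReal_pos.mpr hlogM).ne')
      (Or.inl ENNReal.ofReal_ne_top), ← ENNReal.ofReal_mul (by positivity)]
    have hSsupK : Ssup = ENNReal.ofReal K := (ENNReal.ofReal_toReal htop).symm
    rw [hSsupK, ← ENNReal.ofReal_add hK0 (Real.log_nonneg one_le_two)]
    apply ENNReal.ofReal_le_ofReal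
    rw [div_mul_eq_mul_div, div_le_iff₀ hM0]
    nlinarith [hmain]
  have herr : 1 - ENNReal.ofReal (S / (Fintype.card V : ℝ))
      ≤ (∑ v, Q v {x | T x ≠ v}) / (Fintype.card V : ℝ≥0∞) := by
    have hcompl : ∀ v, Q v {x | T x ≠ v} = ENNReal.ofReal (1 - b v v) := by
      intro v
      haveI := hQ v
      have hset : {x | T x ≠ v} = (A v)ᶜ := by ext x; simp [hA]
      rw [hset, prob_compl_eq_one_sub (hAm v), ENNReal.ofReal_sub _ (hb0 v v),
        ENNReal.ofReal_one, hb]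
      congr 1
      exact (ENNReal.ofReal_toReal (measure_ne_top _ _)).symm
    have hsumE : ∑ v, Q v {x | T x ≠ v} = ENNReal.ofReal ((Fintype.card V : ℝ) - S) := by
      rw [Finset.sum_congr rfl (fun v _ => hcompl v),
        ← ENNReal.ofReal_sum_of_nonneg (fun v _ => by linarith [hb1 v v])]
      congr 1
      rw [Finset.sum_sub_distrib, Finset.sum_const, Finset.card_univ, nsmul_eq_mul, mul_one, hS]
    rw [hsumE]
    have hcast : (Fintype.card V : ℝ≥0∞) = ENNReal.ofReal (Fintype.card V : ℝ) := by
      rw [ENNReal.ofReal_natCast]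
    rw [hcast, ← ENNReal.ofReal_div_of_pos hM0]
    have h1 : (1:ℝ≥0∞) - ENNReal.ofReal (S / (Fintype.card V : ℝ))
        = ENNReal.ofReal (1 - S / (Fintype.card V : ℝ)) := by
      rw [ENNReal.ofReal_sub 1 (by positivity), ENNReal.ofReal_one]
    rw [h1]
    apply ENNReal.ofReal_le_ofReal
    rw [sub_div, div_self hM0.ne']
  have hle1 : ENNReal.ofReal (S / (Fintype.card V : ℝ)) ≤ 1 := by
    rw [← ENNReal.ofReal_one]
    apply ENNReal.ofReal_le_ofReal
    rw [div_le_one hM0]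
    exact hSM
  calc (1:ℝ≥0∞) = (1 - ENNReal.ofReal (S / (Fintype.card V : ℝ)))
        + ENNReal.ofReal (S / (Fintype.card V : ℝ)) := (tsub_add_cancel_of_le hle1).symm
    _ ≤ _ := add_le_add herr hofS
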